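/- If s : (0,∞) → (0,∞) is a self-inverse (s ∘ s = id), surjective, strictly decreasing differentiable function, then for any integrable f, ∫₀^∞ f((x − s(x))²) dx = ∫₀^∞ f(y²) dy. -/

import Mathlib

/-!
Put `g x = x - s x`. As `s` is a decreasing involution of `(0, ∞)`, `g` is an increasing bijection
of `(0, ∞)` onto `ℝ` with `g' = 1 + |s'|` and `g ∘ s = -g`. For an even `F`, substituting `y = g x`
gives `∫_ℝ F = ∫₀^∞ F ∘ g + ∫₀^∞ |s'| (F ∘ g)`, and the substitution `x ↦ s x`, which leaves
`F ∘ g` invariant, turns the second integral into the first. Hence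
`2 ∫₀^∞ F = ∫_ℝ F = 2 ∫₀^∞ F ∘ g`. The same substitutions show that `F ∘ g` is integrable on
`(0, ∞)` exactly when `F` is, so otherwise both sides vanish.
-/

open MeasureTheory Real Set

theorem Set.LeftInvOn.bijOn_self {α : Type*} {f : α → α} {S : Set α} (h : LeftInvOn f f S)
    (hf : MapsTo f S S) : BijOn f S S :=
  InvOn.bijOn ⟨h, h⟩ hf hf

theorem AntitoneOn.deriv_nonpos_of_isOpen {g : ℝ → ℝ} {U : Set ℝ} {x : ℝ} (hg : AntitoneOn g U)
    (hU : IsOpen U) (hx : x ∈ U) : deriv g x ≤ 0 := by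
  rw [← derivWithin_of_isOpen hU hx]
  exact hg.derivWithin_nonpos

theorem MeasureTheory.Integrable.of_smul_of_one_le_norm {α E : Type*} [MeasurableSpace α]
    {μ : Measure α} [NormedAddCommGroup E] [NormedSpace ℝ E] {φ : α → ℝ} {H : α → E}
    (h : Integrable (fun x => φ x • H x) μ) (hφ : AEStronglyMeasurable φ μ)
    (hφ_one : ∀ᵐ x ∂μ, 1 ≤ ‖φ x‖) : Integrable H μ := by
  have hbdd : ∀ᵐ x ∂μ, ‖(φ x)⁻¹‖ ≤ 1 := by
    filter_upwards [hφ_one] with x hx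
    rw [norm_inv]
    exact inv_le_one_of_one_le₀ hx
  refine (h.bdd_smul 1 hφ.aemeasurable.inv.aestronglyMeasurable hbdd).congr ?_
  filter_upwards [hφ_one] with x hx
  have : φ x ≠ 0 := norm_pos_iff.mp (zero_lt_one.trans_le hx)
  simp [smul_smul, inv_mul_cancel₀ this]

theorem Function.Even.integrable_iff_integrableOn_Ioi {E : Type*} [NormedAddCommGroup E]
    {F : ℝ → E} (hF : F.Even) : Integrable F ↔ IntegrableOn F (Ioi 0) := by
  refine ⟨fun h => h.integrableOn, fun h => ?_⟩
  have hIic : IntegrableOn F (Iic 0) := by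
    rw [integrableOn_Iic_iff_integrableOn_Iio]
    have := (neg_zero (G := ℝ) ▸ h).comp_neg_Iio
    rwa [funext hF] at this
  simpa using hIic.union h

theorem Function.Even.integral_eq_two_mul_integral_Ioi {F : ℝ → ℝ} (hF : F.Even) :
    ∫ x, F x = 2 * ∫ x in Ioi 0, F x := by
  have hF_abs : ∀ x, F |x| = F x := fun x => by
    rcases abs_choice x with h | h <;> simp only [h, hF x]
  simpa only [hF_abs] using integral_comp_abs (f := F)

section Involution

variable {s : ℝ → ℝ} {E : Type*} [NormedAddCommGroup E] [NormedSpace ℝ E]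

theorem image_Ioi_id_sub_eq_univ (hs_pos : MapsTo s (Ioi 0) (Ioi 0))
    (hs_inv : LeftInvOn s s (Ioi 0)) (hs_anti : AntitoneOn s (Ioi 0))
    (hs_cont : ContinuousOn s (Ioi 0)) : (fun x => x - s x) '' Ioi 0 = univ := by
  refine eq_univ_of_forall fun u => ?_
  set b := max 1 (|u| + s 1)
  have hb : b ∈ Ioi (0 : ℝ) := mem_Ioi.2 (one_pos.trans_le (le_max_left _ _))
  have hgb : |u| ≤ b - s b := by
    have : s b ≤ s 1 := hs_anti (by norm_num) hb (le_max_left _ _)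
    have : |u| + s 1 ≤ b := le_max_right _ _
    linarith
  refine isPreconnected_Ioi.intermediate_value (hs_pos hb) hb
    (f := fun x => x - s x) (continuousOn_id.sub hs_cont) ⟨?_, by linarith [le_abs_self u]⟩
  change s b - s (s b) ≤ u
  rw [hs_inv hb]
  linarith [neg_abs_le u]

theorem integrableOn_Ioi_iff_comp_involution (hs_pos : MapsTo s (Ioi 0) (Ioi 0))
    (hs_inv : LeftInvOn s s (Ioi 0)) (hs_diff : ∀ x ∈ Ioi (0 : ℝ), DifferentiableAt ℝ s x)
    (H : ℝ → E) :
    IntegrableOn H (Ioi 0) ↔ IntegrableOn (fun x => |deriv s x| • H (s x)) (Ioi 0) := by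
  have hs_bij := hs_inv.bijOn_self hs_pos
  rw [← integrableOn_image_iff_integrableOn_abs_deriv_smul measurableSet_Ioi
    (fun x hx => (hs_diff x hx).hasDerivAt.hasDerivWithinAt) hs_bij.injOn, hs_bij.image_eq]

theorem integral_Ioi_eq_comp_involution (hs_pos : MapsTo s (Ioi 0) (Ioi 0))
    (hs_inv : LeftInvOn s s (Ioi 0)) (hs_diff : ∀ x ∈ Ioi (0 : ℝ), DifferentiableAt ℝ s x)
    (H : ℝ → E) : ∫ x in Ioi 0, H x = ∫ x in Ioi 0, |deriv s x| • H (s x) := by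
  have hs_bij := hs_inv.bijOn_self hs_pos
  rw [← integral_image_eq_integral_abs_deriv_smul measurableSet_Ioi
    (fun x hx => (hs_diff x hx).hasDerivAt.hasDerivWithinAt) hs_bij.injOn, hs_bij.image_eq]

theorem StrictAntiOn.strictMonoOn_id_sub {U : Set ℝ} (hs : StrictAntiOn s U) :
    StrictMonoOn (fun x => x - s x) U :=
  fun a ha b hb hab => by linarith [hs ha hb hab]

theorem integrable_iff_comp_id_sub_involution (hs_pos : MapsTo s (Ioi 0) (Ioi 0))
    (hs_inv : LeftInvOn s s (Ioi 0)) (hs_anti : StrictAntiOn s (Ioi 0))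
    (hs_diff : ∀ x ∈ Ioi (0 : ℝ), DifferentiableAt ℝ s x) (H : ℝ → E) :
    Integrable H ↔ IntegrableOn (fun x => |1 - deriv s x| • H (x - s x)) (Ioi 0) := by
  rw [← integrableOn_univ, ← image_Ioi_id_sub_eq_univ hs_pos hs_inv hs_anti.antitoneOn
    fun x hx => (hs_diff x hx).continuousAt.continuousWithinAt]
  exact integrableOn_image_iff_integrableOn_abs_deriv_smul measurableSet_Ioi
    (fun x hx => ((hasDerivAt_id' x).sub (hs_diff x hx).hasDerivAt).hasDerivWithinAt)
    hs_anti.strictMonoOn_id_sub.injOn H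

theorem integral_eq_comp_id_sub_involution (hs_pos : MapsTo s (Ioi 0) (Ioi 0))
    (hs_inv : LeftInvOn s s (Ioi 0)) (hs_anti : StrictAntiOn s (Ioi 0))
    (hs_diff : ∀ x ∈ Ioi (0 : ℝ), DifferentiableAt ℝ s x) (H : ℝ → E) :
    ∫ y, H y = ∫ x in Ioi 0, |1 - deriv s x| • H (x - s x) := by
  rw [← setIntegral_univ, ← image_Ioi_id_sub_eq_univ hs_pos hs_inv hs_anti.antitoneOn
    fun x hx => (hs_diff x hx).continuousAt.continuousWithinAt]
  exact integral_image_eq_integral_abs_deriv_smul measurableSet_Ioi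
    (fun x hx => ((hasDerivAt_id' x).sub (hs_diff x hx).hasDerivAt).hasDerivWithinAt)
    hs_anti.strictMonoOn_id_sub.injOn H

end Involution

theorem Function.Even.integral_comp_sub_involution_Ioi {F : ℝ → ℝ} (hF : F.Even) {s : ℝ → ℝ}
    (hs_pos : MapsTo s (Ioi 0) (Ioi 0)) (hs_inv : LeftInvOn s s (Ioi 0))
    (hs_anti : StrictAntiOn s (Ioi 0)) (hs_diff : ∀ x ∈ Ioi (0 : ℝ), DifferentiableAt ℝ s x) :
    ∫ x in Ioi 0, F (x - s x) = ∫ y in Ioi 0, F y := by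
  set G : ℝ → ℝ := fun x => F (x - s x)
  have hG_comp : EqOn (fun x => |deriv s x| • G (s x)) (fun x => |deriv s x| • G x) (Ioi 0) :=
    fun x hx => by simp only [G, hs_inv hx, ← hF (x - s x), neg_sub]
  have hs_deriv_nonpos : ∀ x ∈ Ioi (0 : ℝ), deriv s x ≤ 0 :=
    fun x hx => hs_anti.antitoneOn.deriv_nonpos_of_isOpen isOpen_Ioi hx
  have habs_split :
      EqOn (fun x => |1 - deriv s x| • G x) (fun x => G x + |deriv s x| • G x) (Ioi 0) :=
    fun x hx => by
      have := hs_deriv_nonpos x hx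
      simp only [smul_eq_mul, abs_of_nonneg (by linarith : 0 ≤ 1 - deriv s x), abs_of_nonpos this]
      ring
  by_cases hG : IntegrableOn G (Ioi 0)
  · have hsG : IntegrableOn (fun x => |deriv s x| • G x) (Ioi 0) := by
      rwa [← integrableOn_congr_fun hG_comp measurableSet_Ioi,
        ← integrableOn_Ioi_iff_comp_involution hs_pos hs_inv hs_diff]
    have : ∫ y, F y = 2 * ∫ x in Ioi 0, G x := by
      rw [integral_eq_comp_id_sub_involution hs_pos hs_inv hs_anti hs_diff,
        setIntegral_congr_fun measurableSet_Ioi habs_split, integral_add hG hsG,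
        ← setIntegral_congr_fun measurableSet_Ioi hG_comp,
        ← integral_Ioi_eq_comp_involution hs_pos hs_inv hs_diff]
      ring
    linarith [hF.integral_eq_two_mul_integral_Ioi]
  · have hF_int : ¬ IntegrableOn F (Ioi 0) := fun h => hG <|
      ((integrable_iff_comp_id_sub_involution hs_pos hs_inv hs_anti hs_diff F).1
        (hF.integrable_iff_integrableOn_Ioi.2 h)).of_smul_of_one_le_norm (by fun_prop) <|
        (ae_restrict_mem measurableSet_Ioi).mono fun x hx => by
          rw [Real.norm_eq_abs, abs_abs]
          exact le_abs.2 (Or.inl (by linarith [hs_deriv_nonpos x hx]))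
    rw [integral_undef hG, integral_undef hF_int]

theorem gen_cauchy_schlomilch (s : ℝ → ℝ)
    (hs_pos : ∀ x ∈ Ioi (0:ℝ), s x ∈ Ioi (0:ℝ))
    (hs_inv : ∀ x ∈ Ioi (0:ℝ), s (s x) = x)
    (hs_anti : StrictAntiOn s (Ioi (0:ℝ)))
    (hs_diff : ∀ x ∈ Ioi (0:ℝ), DifferentiableAt ℝ s x)
    (f : ℝ → ℝ) :
    ∫ x in Ioi (0 : ℝ), f ((x - s x) ^ 2) = ∫ y in Ioi (0 : ℝ), f (y ^ 2) :=
  Function.Even.integral_comp_sub_involution_Ioi (F := fun y => f (y ^ 2))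
    (fun y => by simp only [neg_sq]) hs_pos hs_inv hs_anti hs_diff
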